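/- There exist constants K > 0 and δ₀ ∈ (0, min(π, 1−π)) such that for all δ ∈ (0, δ₀] and all η, β, μ with |η| ≤ δ, |β| ≤ δ, |μ| ≤ δ, setting ρ = π + η and α = log(ρ/(1−ρ)), the function d₀₁(α,β) = −π·E[(μ + Z)·(1 + exp(α + βμ + βZ))⁻¹] − (1 − π)·E[Z·(1 + exp(α + βZ))⁻¹] satisfies |d₀₁(α,β) − [−π(1−π)μ + ηπμ + {π(1−π) + (1−2π)η}β·E(Z²) − π(1−π)(π − ½)β²·E(Z³)]| ≤ Kδ³. -/

import Mathlib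

/-!
With `σ` the logistic sigmoid, `(1 + exp x)⁻¹ = σ (-x)`, and `α = log (ρ / (1 - ρ))` is chosen
so that `σ (-α) = 1 - ρ`. Both expectations in `d₀₁` have the form `E[X σ(c + b X)]` with
`c = -α`, `b = -β` and `X = μ + Z` or `X = Z`. Since `σ` has bounded third derivative, Taylor's
formula to second order around `c` gives `E[X σ(c + b X)]` up to an error `|b|³ E[X⁴]`, in terms
of `σ (-α) = 1 - ρ` and the first three moments of `X`, which are polynomials in `μ` and the
moments of `Z` (using `E Z = 0`). Expanding `ρ = p + η`, everything of degree at most two in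
`(η, β, μ)` is exactly the claimed expansion, and the rest is a sum of cubic monomials in
`(η, β, μ)` with bounded coefficients.
-/

open MeasureTheory Real Set

theorem abs_le_mul_abs_pow_succ_of_hasDerivAt {f g : ℝ → ℝ} {C : ℝ} {n : ℕ}
    (hf : ∀ x, HasDerivAt f (g x) x) (hg : ∀ x, |g x| ≤ C * |x| ^ n) (hf₀ : f 0 = 0)
    (t : ℝ) : |f t| ≤ C * |t| ^ (n + 1) := by
  have hC : 0 ≤ C := by simpa using (abs_nonneg _).trans (hg 1)
  have hmvt := Convex.norm_image_sub_le_of_norm_hasDerivWithin_le (f' := g) (C := C * |t| ^ n)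
    (fun x _ => (hf x).hasDerivWithinAt)
    (fun x hx => (hg x).trans
      (mul_le_mul_of_nonneg_left (pow_le_pow_left₀ (abs_nonneg x) (by simpa using hx) n) hC))
    (convex_closedBall (0 : ℝ) |t|) (Metric.mem_closedBall_self (abs_nonneg t))
    (by simp : t ∈ Metric.closedBall (0 : ℝ) |t|)
  simpa [hf₀, pow_succ, mul_assoc] using hmvt

theorem abs_sub_taylor_two_le {f f₁ f₂ f₃ : ℝ → ℝ} {C : ℝ}
    (hf : ∀ x, HasDerivAt f (f₁ x) x) (hf₁ : ∀ x, HasDerivAt f₁ (f₂ x) x)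
    (hf₂ : ∀ x, HasDerivAt f₂ (f₃ x) x) (hf₃ : ∀ x, |f₃ x| ≤ C) (a t : ℝ) :
    |f (a + t) - (f a + f₁ a * t + f₂ a / 2 * t ^ 2)| ≤ C * |t| ^ 3 := by
  have h₂ : ∀ s, |f₂ (a + s) - f₂ a| ≤ C * |s| ^ (0 + 1) :=
    abs_le_mul_abs_pow_succ_of_hasDerivAt
      (fun s => ((hf₂ (a + s)).comp_const_add a s).sub_const _)
      (by simpa using fun s => hf₃ (a + s)) (by simp)
  have h₁ : ∀ s, |f₁ (a + s) - f₁ a - f₂ a * s| ≤ C * |s| ^ (1 + 1) :=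
    abs_le_mul_abs_pow_succ_of_hasDerivAt
      (fun s => (((hf₁ (a + s)).comp_const_add a s).sub_const _).sub
        (by simpa using (hasDerivAt_id s).const_mul (f₂ a)))
      h₂ (by simp)
  have h₀ : ∀ s, |f (a + s) - f a - f₁ a * s - f₂ a / 2 * s ^ 2| ≤ C * |s| ^ (2 + 1) := by
    refine abs_le_mul_abs_pow_succ_of_hasDerivAt (fun s => ?_) h₁ (by simp)
    have hsq : HasDerivAt (fun s => f₂ a / 2 * s ^ 2) (f₂ a * s) s :=
      ((hasDerivAt_pow 2 s).const_mul (f₂ a / 2)).congr_deriv (by norm_num; ring)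
    exact ((((hf (a + s)).comp_const_add a s).sub_const _).sub
      (by simpa using (hasDerivAt_id s).const_mul (f₁ a))).sub hsq
  simpa [sub_sub, add_assoc] using h₀ t

theorem hasDerivAt_sigmoid_mul_one_sub (x : ℝ) :
    HasDerivAt (fun x => sigmoid x * (1 - sigmoid x))
      (sigmoid x * (1 - sigmoid x) * (1 - 2 * sigmoid x)) x :=
  ((hasDerivAt_sigmoid x).mul ((hasDerivAt_sigmoid x).const_sub 1)).congr_deriv (by ring)

theorem hasDerivAt_sigmoid_mul_one_sub_mul (x : ℝ) :
    HasDerivAt (fun x => sigmoid x * (1 - sigmoid x) * (1 - 2 * sigmoid x))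
      (sigmoid x * (1 - sigmoid x) * (1 - 6 * sigmoid x + 6 * sigmoid x ^ 2)) x :=
  ((hasDerivAt_sigmoid_mul_one_sub x).mul
    (((hasDerivAt_sigmoid x).const_mul 2).const_sub 1)).congr_deriv (by ring)

theorem abs_sigmoid_third_deriv_le (x : ℝ) :
    |sigmoid x * (1 - sigmoid x) * (1 - 6 * sigmoid x + 6 * sigmoid x ^ 2)| ≤ 1 := by
  have h₀ := sigmoid_nonneg x
  have h₁ := sigmoid_le_one x
  rw [abs_mul]
  refine mul_le_one₀ ?_ (abs_nonneg _) ?_ <;> rw [abs_le] <;> constructor <;> nlinarith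

theorem sigmoid_log_div_one_sub {ρ : ℝ} (h₀ : 0 < ρ) (h₁ : ρ < 1) :
    sigmoid (log (ρ / (1 - ρ))) = ρ := by
  have h₁' : 0 < 1 - ρ := sub_pos.2 h₁
  rw [sigmoid_def, exp_neg, exp_log (div_pos h₀ h₁')]
  field_simp
  ring

/-- `E[X * (σ c + σ' c * b X + σ'' c / 2 * (b X) ^ 2)]`, written in terms of `s = σ c` and the
moments `mₖ = E[X ^ k]`. -/
noncomputable def sigmoidTaylorMean (s b m₁ m₂ m₃ : ℝ) : ℝ :=
  s * m₁ + s * (1 - s) * b * m₂ + s * (1 - s) * (1 - 2 * s) / 2 * b ^ 2 * m₃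

theorem add_pow_four_le (a b : ℝ) : (a + b) ^ 4 ≤ 8 * (a ^ 4 + b ^ 4) :=
  (Even.add_pow_le (by decide)).trans_eq (by norm_num)

section Moments

variable {Ω : Type*} [MeasurableSpace Ω] {P : Measure Ω} {X Z : Ω → ℝ}

theorem integrable_pow_of_le [IsFiniteMeasure P] (hX : AEStronglyMeasurable X P) {k n : ℕ}
    (hkn : k ≤ n) (hn : Integrable (fun ω => X ω ^ n) P) :
    Integrable (fun ω => X ω ^ k) P := by
  have hXk : AEStronglyMeasurable (fun ω => X ω ^ k) P := hX.pow k
  refine (integrable_norm_iff hXk).mp ?_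
  simpa only [norm_pow] using
    integrable_norm_pow_of_le hX hkn (by simpa only [norm_pow] using hn.norm)

theorem integrable_cubic [IsFiniteMeasure P] (hX : AEStronglyMeasurable X P)
    (hX3 : Integrable (fun ω => X ω ^ 3) P) (a₀ a₁ a₂ a₃ : ℝ) :
    Integrable (fun ω => a₀ + a₁ * X ω + a₂ * X ω ^ 2 + a₃ * X ω ^ 3) P := by
  have hX1 : Integrable X P := by simpa using integrable_pow_of_le hX (by norm_num : 1 ≤ 3) hX3
  have hX2 := integrable_pow_of_le hX (by norm_num : 2 ≤ 3) hX3
  exact (((integrable_const a₀).add (hX1.const_mul a₁)).add (hX2.const_mul a₂)).add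
    (hX3.const_mul a₃)

theorem integral_cubic [IsProbabilityMeasure P] (hX : AEStronglyMeasurable X P)
    (hX3 : Integrable (fun ω => X ω ^ 3) P) (a₀ a₁ a₂ a₃ : ℝ) :
    ∫ ω, a₀ + a₁ * X ω + a₂ * X ω ^ 2 + a₃ * X ω ^ 3 ∂P
      = a₀ + a₁ * ∫ ω, X ω ∂P + a₂ * ∫ ω, X ω ^ 2 ∂P + a₃ * ∫ ω, X ω ^ 3 ∂P := by
  have hX1 : Integrable X P := by simpa using integrable_pow_of_le hX (by norm_num : 1 ≤ 3) hX3
  have hX2 := integrable_pow_of_le hX (by norm_num : 2 ≤ 3) hX3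
  rw [integral_add _ (hX3.const_mul a₃), integral_add _ (hX2.const_mul a₂),
    integral_add (integrable_const a₀) (hX1.const_mul a₁)]
  · simp [integral_const_mul]
  · exact (integrable_const a₀).add (hX1.const_mul a₁)
  · exact ((integrable_const a₀).add (hX1.const_mul a₁)).add (hX2.const_mul a₂)

theorem abs_integral_mul_comp_sub_taylor_two_le [IsProbabilityMeasure P]
    {f f₁ f₂ f₃ : ℝ → ℝ} {C : ℝ}
    (hf : ∀ x, HasDerivAt f (f₁ x) x) (hf₁ : ∀ x, HasDerivAt f₁ (f₂ x) x)
    (hf₂ : ∀ x, HasDerivAt f₂ (f₃ x) x) (hf₃ : ∀ x, |f₃ x| ≤ C)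
    (hX : AEStronglyMeasurable X P) (hX4 : Integrable (fun ω => X ω ^ 4) P) (c b : ℝ) :
    |∫ ω, X ω * f (c + b * X ω) ∂P
        - (f c * ∫ ω, X ω ∂P + f₁ c * b * ∫ ω, X ω ^ 2 ∂P + f₂ c / 2 * b ^ 2 * ∫ ω, X ω ^ 3 ∂P)|
      ≤ C * |b| ^ 3 * ∫ ω, X ω ^ 4 ∂P := by
  have hX3 := integrable_pow_of_le hX (by norm_num : 3 ≤ 4) hX4
  have hT := integrable_cubic hX hX3 0 (f c) (f₁ c * b) (f₂ c / 2 * b ^ 2)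
  set T : Ω → ℝ := fun ω => 0 + f c * X ω + f₁ c * b * X ω ^ 2 + f₂ c / 2 * b ^ 2 * X ω ^ 3
  have hrem : ∀ ω, ‖X ω * f (c + b * X ω) - T ω‖ ≤ C * |b| ^ 3 * X ω ^ 4 := fun ω => calc
    ‖X ω * f (c + b * X ω) - T ω‖
        = |X ω| * |f (c + b * X ω) - (f c + f₁ c * (b * X ω) + f₂ c / 2 * (b * X ω) ^ 2)| := by
      rw [Real.norm_eq_abs, ← abs_mul]; congr 1; ring
    _ ≤ |X ω| * (C * |b * X ω| ^ 3) := by gcongr; exact abs_sub_taylor_two_le hf hf₁ hf₂ hf₃ _ _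
    _ = C * |b| ^ 3 * X ω ^ 4 := by rw [abs_mul, ← (by decide : Even 4).pow_abs (X ω)]; ring
  have hcont : Continuous f := continuous_iff_continuousAt.2 fun x => (hf x).continuousAt
  have hdiff : Integrable (fun ω => X ω * f (c + b * X ω) - T ω) P :=
    (hX4.const_mul _).mono'
      ((hX.mul (hcont.comp_aestronglyMeasurable ((hX.const_mul b).const_add c))).sub hT.1)
      (ae_of_all _ hrem)
  have hF : Integrable (fun ω => X ω * f (c + b * X ω)) P :=
    (hT.add hdiff).congr (ae_of_all _ fun ω => by simp)
  calc _ = ‖∫ ω, (X ω * f (c + b * X ω) - T ω) ∂P‖ := by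
        rw [integral_sub hF hT, integral_cubic hX hX3, Real.norm_eq_abs]; congr 1; ring
    _ ≤ ∫ ω, C * |b| ^ 3 * X ω ^ 4 ∂P :=
      norm_integral_le_of_norm_le (hX4.const_mul _) (ae_of_all _ hrem)
    _ = C * |b| ^ 3 * ∫ ω, X ω ^ 4 ∂P := integral_const_mul _ _

theorem abs_integral_mul_sigmoid_sub_le [IsProbabilityMeasure P]
    (hX : AEStronglyMeasurable X P) (hX4 : Integrable (fun ω => X ω ^ 4) P) (c b : ℝ) :
    |∫ ω, X ω * sigmoid (c + b * X ω) ∂P - sigmoidTaylorMean (sigmoid c) b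
        (∫ ω, X ω ∂P) (∫ ω, X ω ^ 2 ∂P) (∫ ω, X ω ^ 3 ∂P)|
      ≤ |b| ^ 3 * ∫ ω, X ω ^ 4 ∂P := by
  simpa [sigmoidTaylorMean] using abs_integral_mul_comp_sub_taylor_two_le hasDerivAt_sigmoid
    hasDerivAt_sigmoid_mul_one_sub hasDerivAt_sigmoid_mul_one_sub_mul abs_sigmoid_third_deriv_le
    hX hX4 c b

theorem integral_const_add [IsProbabilityMeasure P] (hZ : Integrable Z P)
    (hZ₀ : ∫ ω, Z ω ∂P = 0) (m : ℝ) :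
    ∫ ω, (m + Z ω) ∂P = m := by
  rw [integral_add (integrable_const m) hZ, hZ₀]; simp

theorem integral_const_add_sq [IsProbabilityMeasure P] (hZ : AEStronglyMeasurable Z P)
    (hZ2 : Integrable (fun ω => Z ω ^ 2) P) (hZ₀ : ∫ ω, Z ω ∂P = 0) (m : ℝ) :
    ∫ ω, (m + Z ω) ^ 2 ∂P = m ^ 2 + ∫ ω, Z ω ^ 2 ∂P := by
  have hZ1 : Integrable Z P := by simpa using integrable_pow_of_le hZ (by norm_num : 1 ≤ 2) hZ2
  rw [show (fun ω => (m + Z ω) ^ 2) = fun ω => m ^ 2 + 2 * m * Z ω + Z ω ^ 2 by ext; ring,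
    integral_add _ hZ2, integral_add (integrable_const _) (hZ1.const_mul _), integral_const_mul,
    hZ₀]
  · simp
  · exact (integrable_const _).add (hZ1.const_mul _)

theorem integral_const_add_pow_three [IsProbabilityMeasure P] (hZ : AEStronglyMeasurable Z P)
    (hZ3 : Integrable (fun ω => Z ω ^ 3) P) (hZ₀ : ∫ ω, Z ω ∂P = 0) (m : ℝ) :
    ∫ ω, (m + Z ω) ^ 3 ∂P = m ^ 3 + 3 * m * ∫ ω, Z ω ^ 2 ∂P + ∫ ω, Z ω ^ 3 ∂P := by
  rw [show (fun ω => (m + Z ω) ^ 3)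
      = fun ω => m ^ 3 + 3 * m ^ 2 * Z ω + 3 * m * Z ω ^ 2 + 1 * Z ω ^ 3 by
    ext; ring, integral_cubic hZ hZ3, hZ₀]
  ring

theorem integrable_const_add_pow_four [IsFiniteMeasure P] (hZ : AEStronglyMeasurable Z P)
    (hZ4 : Integrable (fun ω => Z ω ^ 4) P) (m : ℝ) :
    Integrable (fun ω => (m + Z ω) ^ 4) P :=
  (((integrable_const _).add hZ4).const_mul 8).mono' ((hZ.const_add m).pow 4)
    (ae_of_all _ fun ω => by
      rw [Real.norm_eq_abs, abs_of_nonneg (by positivity)]; exact add_pow_four_le m (Z ω))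

theorem integral_const_add_pow_four_le [IsProbabilityMeasure P]
    (hZ4 : Integrable (fun ω => Z ω ^ 4) P) (m : ℝ) :
    ∫ ω, (m + Z ω) ^ 4 ∂P ≤ 8 * (m ^ 4 + ∫ ω, Z ω ^ 4 ∂P) := calc
  _ ≤ ∫ ω, 8 * (m ^ 4 + Z ω ^ 4) ∂P :=
    integral_mono_of_nonneg (ae_of_all _ fun ω => by positivity)
      (((integrable_const _).add hZ4).const_mul 8) (ae_of_all _ fun ω => add_pow_four_le m (Z ω))
  _ = 8 * (m ^ 4 + ∫ ω, Z ω ^ 4 ∂P) := by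
    rw [integral_const_mul, integral_add (integrable_const _) hZ4]; simp

theorem abs_integral_const_add_mul_sigmoid_sub_le [IsProbabilityMeasure P]
    (hZ : AEStronglyMeasurable Z P) (hZ4 : Integrable (fun ω => Z ω ^ 4) P)
    (hZ₀ : ∫ ω, Z ω ∂P = 0) (m c b : ℝ) :
    |∫ ω, (m + Z ω) * sigmoid (c + b * (m + Z ω)) ∂P - sigmoidTaylorMean (sigmoid c) b m
        (m ^ 2 + ∫ ω, Z ω ^ 2 ∂P) (m ^ 3 + 3 * m * ∫ ω, Z ω ^ 2 ∂P + ∫ ω, Z ω ^ 3 ∂P)|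
      ≤ 8 * |b| ^ 3 * (m ^ 4 + ∫ ω, Z ω ^ 4 ∂P) := by
  have hZ1 : Integrable Z P := by simpa using integrable_pow_of_le hZ (by norm_num : 1 ≤ 4) hZ4
  have hZ2 := integrable_pow_of_le hZ (by norm_num : 2 ≤ 4) hZ4
  have hZ3 := integrable_pow_of_le hZ (by norm_num : 3 ≤ 4) hZ4
  have h := abs_integral_mul_sigmoid_sub_le (hZ.const_add m)
    (integrable_const_add_pow_four hZ hZ4 m) c b
  rw [integral_const_add hZ1 hZ₀, integral_const_add_sq hZ hZ2 hZ₀,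
    integral_const_add_pow_three hZ hZ3 hZ₀] at h
  calc _ ≤ |b| ^ 3 * ∫ ω, (m + Z ω) ^ 4 ∂P := h
    _ ≤ |b| ^ 3 * (8 * (m ^ 4 + ∫ ω, Z ω ^ 4 ∂P)) := by
      gcongr; exact integral_const_add_pow_four_le hZ4 m
    _ = 8 * |b| ^ 3 * (m ^ 4 + ∫ ω, Z ω ^ 4 ∂P) := by ring

end Moments

theorem abs_mul_mul_mul_le {c x y z δ : ℝ} (hx : |x| ≤ δ) (hy : |y| ≤ δ) (hz : |z| ≤ δ) :
    |c * x * y * z| ≤ |c| * δ ^ 3 := by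
  have hδ : 0 ≤ δ := (abs_nonneg x).trans hx
  simp only [abs_mul]
  calc |c| * |x| * |y| * |z| ≤ |c| * δ * δ * δ := by gcongr
    _ = |c| * δ ^ 3 := by ring

theorem abs_neg_mul_sigmoidTaylorMean_sub_expansion_le {p η β μ δ M₂ M₃ : ℝ}
    (hp : p ∈ Icc (0 : ℝ) 1) (hρ : p + η ∈ Icc (0 : ℝ) 1) (hδ : δ ≤ 1)
    (hη : |η| ≤ δ) (hβ : |β| ≤ δ) (hμ : |μ| ≤ δ) :
    |(-p * sigmoidTaylorMean (1 - (p + η)) (-β) μ (μ ^ 2 + M₂) (μ ^ 3 + 3 * μ * M₂ + M₃)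
        - (1 - p) * sigmoidTaylorMean (1 - (p + η)) (-β) 0 M₂ M₃)
      - (-(p * (1 - p)) * μ + η * p * μ + (p * (1 - p) + (1 - 2 * p) * η) * β * M₂
          - p * (1 - p) * (p - 1 / 2) * β ^ 2 * M₃)|
      ≤ 16 * (1 + |M₂| + |M₃|) * δ ^ 3 := by
  obtain ⟨hp₀, hp₁⟩ := hp
  obtain ⟨hρ₀, hρ₁⟩ := hρ
  set ρ := p + η with hρ
  set k := p * (ρ * (1 - ρ))
  -- `η * s = f (p + η) - f p` for `f x = x * (1 - x) * (x - 1 / 2)`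
  set s := -3 * p ^ 2 - 3 * p * η - η ^ 2 + 3 * p + 3 / 2 * η - 1 / 2
  -- the terms of degree at most two cancel exactly
  have hsplit : (-p * sigmoidTaylorMean (1 - ρ) (-β) μ (μ ^ 2 + M₂) (μ ^ 3 + 3 * μ * M₂ + M₃)
        - (1 - p) * sigmoidTaylorMean (1 - ρ) (-β) 0 M₂ M₃)
      - (-(p * (1 - p)) * μ + η * p * μ + (p * (1 - p) + (1 - 2 * p) * η) * β * M₂
          - p * (1 - p) * (p - 1 / 2) * β ^ 2 * M₃)
      = k * β * μ * μ + (-M₂) * η * η * β + (-(M₃ * s)) * η * β * β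
        + (-(k * (2 * ρ - 1) / 2 * (μ ^ 2 + 3 * M₂))) * β * β * μ := by
    simp only [sigmoidTaylorMean, k, s, hρ]; ring
  have hρ' : |ρ * (1 - ρ)| ≤ 1 := by rw [abs_le]; constructor <;> nlinarith
  have h2ρ : |2 * ρ - 1| ≤ 1 := abs_le.2 ⟨by linarith, by linarith⟩
  have hk : |k| ≤ 1 := by
    rw [abs_mul]; exact mul_le_one₀ (abs_le.2 ⟨by linarith, hp₁⟩) (abs_nonneg _) hρ'
  have hs : |s| ≤ 12 := by
    have hη₀ : -1 ≤ η := by linarith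
    have hη₁ : η ≤ 1 := by linarith
    rw [abs_le]; constructor <;> simp only [s] <;>
      nlinarith [sq_nonneg p, sq_nonneg η, sq_nonneg (p + η), sq_nonneg (p - η)]
  have hμ₂ : |μ ^ 2 + 3 * M₂| ≤ 1 + 3 * |M₂| := by
    have : μ ^ 2 ≤ 1 := by rw [← sq_abs]; exact pow_le_one₀ (abs_nonneg μ) (hμ.trans hδ)
    refine (abs_add_le _ _).trans ?_
    rw [abs_mul, abs_of_nonneg (sq_nonneg μ), abs_of_pos three_pos]; linarith
  have hc₃ : |-(M₃ * s)| ≤ 12 * |M₃| := by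
    rw [abs_neg, abs_mul, mul_comm 12]; gcongr
  have hc₄ : |-(k * (2 * ρ - 1) / 2 * (μ ^ 2 + 3 * M₂))| ≤ 1 * 1 / 2 * (1 + 3 * |M₂|) := by
    rw [abs_neg, abs_mul, abs_div, abs_mul, abs_two]; gcongr
  have hδ₃ : 0 ≤ δ ^ 3 := pow_nonneg ((abs_nonneg η).trans hη) 3
  rw [hsplit, ← Real.norm_eq_abs]
  calc _ ≤ _ := norm_add₄_le
    _ ≤ |k| * δ ^ 3 + |-M₂| * δ ^ 3 + |-(M₃ * s)| * δ ^ 3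
          + |-(k * (2 * ρ - 1) / 2 * (μ ^ 2 + 3 * M₂))| * δ ^ 3 := by
      simp only [Real.norm_eq_abs]
      exact add_le_add (add_le_add_three (abs_mul_mul_mul_le hβ hμ hμ)
        (abs_mul_mul_mul_le hη hη hβ) (abs_mul_mul_mul_le hη hβ hβ)) (abs_mul_mul_mul_le hβ hβ hμ)
    _ ≤ 16 * (1 + |M₂| + |M₃|) * δ ^ 3 := by
      rw [← add_mul, ← add_mul, ← add_mul, abs_neg M₂]
      exact mul_le_mul_of_nonneg_right (by linarith [abs_nonneg M₂, abs_nonneg M₃]) hδ₃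

theorem abs_neg_mul_sub_sub_le {p x y x' y' t e r : ℝ} (hp : p ∈ Icc (0 : ℝ) 1)
    (hx : |x - x'| ≤ e) (hy : |y - y'| ≤ e) (h : |(-p * x' - (1 - p) * y') - t| ≤ r) :
    |(-p * x - (1 - p) * y) - t| ≤ e + r := by
  obtain ⟨hp₀, hp₁⟩ := hp
  calc |(-p * x - (1 - p) * y) - t|
      = |-(p * (x - x')) - (1 - p) * (y - y') + ((-p * x' - (1 - p) * y') - t)| := by ring_nf
    _ ≤ p * |x - x'| + (1 - p) * |y - y'| + r := by
      refine (abs_add_le _ _).trans (add_le_add ((abs_sub _ _).trans_eq ?_) h)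
      rw [abs_neg, abs_mul, abs_mul, abs_of_nonneg hp₀, abs_of_nonneg (sub_nonneg.2 hp₁)]
    _ ≤ p * e + (1 - p) * e + r := by gcongr
    _ = e + r := by ring

theorem abs_sub_expansion_le_of_abs_sub_sigmoidTaylorMean_le {p η β μ δ M₂ M₃ M₄ I₁ I₂ : ℝ}
    (hp : p ∈ Icc (0 : ℝ) 1) (hρ : p + η ∈ Icc (0 : ℝ) 1) (hδ : δ ≤ 1)
    (hη : |η| ≤ δ) (hβ : |β| ≤ δ) (hμ : |μ| ≤ δ) (hM₄ : 0 ≤ M₄)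
    (h₁ : |I₁ - sigmoidTaylorMean (1 - (p + η)) (-β) μ (μ ^ 2 + M₂) (μ ^ 3 + 3 * μ * M₂ + M₃)|
      ≤ 8 * |-β| ^ 3 * (μ ^ 4 + M₄))
    (h₂ : |I₂ - sigmoidTaylorMean (1 - (p + η)) (-β) 0 M₂ M₃| ≤ |-β| ^ 3 * M₄) :
    |(-p * I₁ - (1 - p) * I₂)
      - (-(p * (1 - p)) * μ + η * p * μ + (p * (1 - p) + (1 - 2 * p) * η) * β * M₂
          - p * (1 - p) * (p - 1 / 2) * β ^ 2 * M₃)|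
      ≤ 24 * (1 + |M₂| + |M₃| + M₄) * δ ^ 3 := by
  have hδ₀ : 0 ≤ δ := (abs_nonneg η).trans hη
  have hβ₃ : |-β| ^ 3 ≤ δ ^ 3 := by rw [abs_neg]; exact pow_le_pow_left₀ (abs_nonneg β) hβ 3
  have hμ₄ : μ ^ 4 ≤ 1 := by
    rw [← (by decide : Even 4).pow_abs]; exact pow_le_one₀ (abs_nonneg μ) (hμ.trans hδ)
  have hE₁ : 8 * |-β| ^ 3 * (μ ^ 4 + M₄) ≤ 8 * (1 + M₄) * δ ^ 3 := calc
    _ ≤ 8 * δ ^ 3 * (1 + M₄) := by gcongr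
    _ = 8 * (1 + M₄) * δ ^ 3 := by ring
  have hE₂ : |-β| ^ 3 * M₄ ≤ 8 * (1 + M₄) * δ ^ 3 := by nlinarith [pow_nonneg hδ₀ 3]
  refine (abs_neg_mul_sub_sub_le hp (h₁.trans hE₁) (h₂.trans hE₂)
    (abs_neg_mul_sigmoidTaylorMean_sub_expansion_le hp hρ hδ hη hβ hμ)).trans ?_
  nlinarith [pow_nonneg hδ₀ 3, abs_nonneg M₂, abs_nonneg M₃]

/-- Expansion (6.8) for the `β`-derivative of the expected negative logistic
log-likelihood: with `ρ = π + η` and `α = log(ρ/(1−ρ))`,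
`|d₀₁(α,β) − [−π(1−π)μ + ηπμ + {π(1−π) + (1−2π)η}β·E Z² − π(1−π)(π − ½)β²·E Z³]| ≤ Kδ³`,
uniformly in `|η|, |β|, |μ| ≤ δ ≤ δ₀`. -/
theorem d01_expansion
    {Ω : Type*} [MeasurableSpace Ω] (P : Measure Ω) [IsProbabilityMeasure P]
    (Z : Ω → ℝ) (hZmeas : Measurable Z)
    (hZmom : Integrable (fun ω => (Z ω) ^ 4) P)
    (hZmean : ∫ ω, Z ω ∂P = 0)
    (p : ℝ) (hp : p ∈ Set.Ioo (0 : ℝ) 1) :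
    ∃ K : ℝ, 0 < K ∧ ∃ δ₀ ∈ Set.Ioo (0 : ℝ) (min p (1 - p)),
      ∀ δ ∈ Set.Ioc (0 : ℝ) δ₀, ∀ η β μ : ℝ,
        |η| ≤ δ → |β| ≤ δ → |μ| ≤ δ →
          |(-p * ∫ ω, (μ + Z ω) * (1 + Real.exp (Real.log ((p + η) / (1 - (p + η)))
                  + β * μ + β * Z ω))⁻¹ ∂P
              - (1 - p) * ∫ ω, Z ω * (1 + Real.exp (Real.log ((p + η) / (1 - (p + η)))
                  + β * Z ω))⁻¹ ∂P)
            - (-(p * (1 - p)) * μ + η * p * μ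
                + (p * (1 - p) + (1 - 2 * p) * η) * β * (∫ ω, (Z ω) ^ 2 ∂P)
                - p * (1 - p) * (p - 1 / 2) * β ^ 2 * ∫ ω, (Z ω) ^ 3 ∂P)|
          ≤ K * δ ^ 3 := by
  obtain ⟨hp₀, hp₁⟩ := hp
  have hZ : AEStronglyMeasurable Z P := hZmeas.aestronglyMeasurable
  have hmin : 0 < min p (1 - p) := lt_min hp₀ (sub_pos.2 hp₁)
  refine ⟨24 * (1 + |∫ ω, Z ω ^ 2 ∂P| + |∫ ω, Z ω ^ 3 ∂P| + ∫ ω, Z ω ^ 4 ∂P),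
    by positivity, min p (1 - p) / 2, ⟨by positivity, half_lt_self hmin⟩, ?_⟩
  rintro δ ⟨hδ₀, hδ⟩ η β μ hη hβ hμ
  have hδp : δ < p ∧ δ < 1 - p :=
    ⟨by linarith [min_le_left p (1 - p)], by linarith [min_le_right p (1 - p)]⟩
  obtain ⟨hρ₀, hρ₁⟩ : 0 < p + η ∧ p + η < 1 :=
    ⟨by linarith [neg_abs_le η], by linarith [le_abs_self η]⟩
  set α := log ((p + η) / (1 - (p + η)))
  have hα : sigmoid (-α) = 1 - (p + η) := by rw [sigmoid_neg, sigmoid_log_div_one_sub hρ₀ hρ₁]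
  have hσ : ∀ x, (1 + exp (α + β * x))⁻¹ = sigmoid (-α + -β * x) := fun x => by
    rw [sigmoid_def]; ring_nf
  have e₁ : ∫ ω, (μ + Z ω) * (1 + exp (α + β * μ + β * Z ω))⁻¹ ∂P
      = ∫ ω, (μ + Z ω) * sigmoid (-α + -β * (μ + Z ω)) ∂P :=
    integral_congr_ae (ae_of_all _ fun ω => by dsimp only; rw [← hσ, mul_add, add_assoc])
  have h₁ := abs_integral_const_add_mul_sigmoid_sub_le hZ hZmom hZmean μ (-α) (-β)
  have h₂ := abs_integral_mul_sigmoid_sub_le hZ hZmom (-α) (-β)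
  rw [hα] at h₁
  rw [hα, hZmean] at h₂
  rw [e₁]
  simp only [hσ]
  exact abs_sub_expansion_le_of_abs_sub_sigmoidTaylorMean_le ⟨hp₀.le, hp₁.le⟩
    ⟨hρ₀.le, hρ₁.le⟩ (by linarith) hη hβ hμ (integral_nonneg fun ω => by positivity) h₁ h₂
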